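/- arXiv:1201.0557 — 2 statements merged into one kernel-verified Lean document; each statement's English description precedes it below -/
import Mathlib

section
/- Let R be a subuniverse of the product algebra A × B, and define for X ⊆ A the neighborhood X⁺ = {b ∈ B : ∃ a ∈ X, (a,b) ∈ R}. If X is a subuniverse of A then X⁺ is a subuniverse of B. Moreover, if R is subdirect in A × B and X is an absorbing subuniverse of A, then X⁺ is an absorbing subuniverse of B (with respect to the same term). -/
structure Signature : Type 1 where
  symbols : Type
  arity : symbols → ℕ

structure UAlgebra (σ : Signature) : Type 1 where
  carrier : Type
  op : ∀ s : σ.symbols, (Fin (σ.arity s) → carrier) → carrier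

inductive Term (σ : Signature) (n : ℕ) : Type
  | var : Fin n → Term σ n
  | app (s : σ.symbols) : (Fin (σ.arity s) → Term σ n) → Term σ n

def Term.eval {σ : Signature} (A : UAlgebra σ) {n : ℕ} :
    Term σ n → (Fin n → A.carrier) → A.carrier
  | .var i, x => x i
  | .app s ts, x => A.op s fun j => Term.eval A (ts j) x

/-- `B` is a subuniverse of the algebra `A`. -/
def Subuniverse {σ : Signature} (A : UAlgebra σ) (B : Set A.carrier) : Prop :=
  ∀ (s : σ.symbols) (a : Fin (σ.arity s) → A.carrier), (∀ i, a i ∈ B) → A.op s a ∈ B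

/-- `B` absorbs `A` with respect to the term `t`. -/
def AbsorbsWith {σ : Signature} (A : UAlgebra σ) (B : Set A.carrier) {n : ℕ} (t : Term σ n) : Prop :=
  ∀ (k : Fin n) (a : Fin n → A.carrier), (∀ i, i ≠ k → a i ∈ B) → t.eval A a ∈ B

/-- `C` absorbs the subalgebra with universe `B` (inside the ambient algebra `A`)
with respect to the term `t`. -/
def AbsorbsWithIn {σ : Signature} (A : UAlgebra σ) (B C : Set A.carrier) {n : ℕ}
    (t : Term σ n) : Prop :=
  ∀ (k : Fin n) (a : Fin n → A.carrier), (∀ i, a i ∈ B) → (∀ i, i ≠ k → a i ∈ C) →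
    t.eval A a ∈ C

/-- `B` is an absorbing subalgebra (subuniverse) of `A`. -/
def Absorbing {σ : Signature} (A : UAlgebra σ) (B : Set A.carrier) : Prop :=
  Subuniverse A B ∧ ∃ (n : ℕ) (t : Term σ n), AbsorbsWith A B t

/-- `B` is a proper absorbing subalgebra of `A`: `∅ ≠ B ≠ A`. -/
def ProperAbsorbing {σ : Signature} (A : UAlgebra σ) (B : Set A.carrier) : Prop :=
  Absorbing A B ∧ B.Nonempty ∧ B ≠ Set.univ

/-- `C` is a minimal absorbing subalgebra of `A`. -/
def MinAbsorbing {σ : Signature} (A : UAlgebra σ) (C : Set A.carrier) : Prop :=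
  Absorbing A C ∧ C.Nonempty ∧ ∀ C' ⊆ C, Absorbing A C' → C'.Nonempty → C' = C

/-- All (basic, equivalently term) operations of `A` are idempotent. -/
def Idempotent {σ : Signature} (A : UAlgebra σ) : Prop :=
  ∀ (s : σ.symbols) (a : A.carrier), A.op s (fun _ => a) = a

/-- `t` is a Taylor term of the algebra `A`. -/
def IsTaylorTerm {σ : Signature} (A : UAlgebra σ) {k : ℕ} (t : Term σ k) : Prop :=
  (∀ a : A.carrier, t.eval A (fun _ => a) = a) ∧
  ∀ j : Fin k, ∃ u v : Fin k → Fin 2, u j = 0 ∧ v j = 1 ∧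
    ∀ x : Fin 2 → A.carrier, t.eval A (fun i => x (u i)) = t.eval A (fun i => x (v i))

/-- The product of two algebras of the same signature. -/
def UAlgebra.prod {σ : Signature} (A B : UAlgebra σ) : UAlgebra σ where
  carrier := A.carrier × B.carrier
  op s x := (A.op s fun i => (x i).1, B.op s fun i => (x i).2)

/-- The `k`-th power of an algebra. -/
def UAlgebra.pow {σ : Signature} (A : UAlgebra σ) (k : ℕ) : UAlgebra σ where
  carrier := Fin k → A.carrier
  op s x := fun j => A.op s fun i => x i j

/-- `R ⊆ A × B` is subdirect: both projections are onto. -/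
def Subdirect2 {α β : Type} (R : Set (α × β)) : Prop :=
  (∀ a, ∃ b, (a, b) ∈ R) ∧ ∀ b, ∃ a, (a, b) ∈ R

/-- `a` and `a'` are linked in `R` (connected in the bipartite graph of `R`). -/
def LinkedPair {α β : Type} (R : Set (α × β)) (a a' : α) : Prop :=
  Relation.ReflTransGen (fun x y => ∃ b, (x, b) ∈ R ∧ (y, b) ∈ R) a a'

/-- `R` is linked: any two elements of the projection of `R` to the first
coordinate are `R`-linked. -/
def IsLinked {α β : Type} (R : Set (α × β)) : Prop :=
  ∀ a a', (∃ b, (a, b) ∈ R) → (∃ b, (a', b) ∈ R) → LinkedPair R a a'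

/-- Cyclic shift of a `k`-tuple. -/
def cycShift {α : Type} {k : ℕ} (x : Fin k → α) : Fin k → α := fun i =>
  x ⟨(i.val + 1) % k, Nat.mod_lt _ (Nat.lt_of_le_of_lt (Nat.zero_le _) i.isLt)⟩

/-- `t` is a cyclic term of `A`: idempotent and invariant under cyclic shift. -/
def IsCyclicTerm {σ : Signature} (A : UAlgebra σ) {k : ℕ} (t : Term σ k) : Prop :=
  (∀ a : A.carrier, t.eval A (fun _ => a) = a) ∧
  ∀ x : Fin k → A.carrier, t.eval A x = t.eval A (cycShift x)

lemma Subuniverse.eval_mem {σ : Signature} {A : UAlgebra σ} {X : Set A.carrier}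
    (hX : Subuniverse A X) {n : ℕ} (t : Term σ n) {a : Fin n → A.carrier}
    (ha : ∀ i, a i ∈ X) : t.eval A a ∈ X := by
  induction t with
  | var i => exact ha i
  | app s ts ih => exact hX s _ ih

lemma Term.eval_prod {σ : Signature} (A B : UAlgebra σ) {n : ℕ} (t : Term σ n)
    (a : Fin n → A.carrier) (b : Fin n → B.carrier) :
    t.eval (A.prod B) (fun i => (a i, b i)) = (t.eval A a, t.eval B b) := by
  induction t with
  | var i => rfl
  | app s ts ih =>
    change ((A.prod B).op s fun j => (ts j).eval (A.prod B) _) = _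
    simp only [ih]
    rfl

/-- The paper's `X⁺`. -/
def neighbourhood {α β : Type} (R : Set (α × β)) (X : Set α) : Set β :=
  {b | ∃ a ∈ X, (a, b) ∈ R}

section Neighbourhood

variable {σ : Signature} {A B : UAlgebra σ} {R : Set (A.carrier × B.carrier)}
  {X : Set A.carrier}

lemma Subuniverse.eval_mem_prod (hR : Subuniverse (A.prod B) R) {n : ℕ} (t : Term σ n)
    {a : Fin n → A.carrier} {b : Fin n → B.carrier} (hab : ∀ i, (a i, b i) ∈ R) :
    (t.eval A a, t.eval B b) ∈ R := by
  have h := hR.eval_mem t (a := fun i => (a i, b i)) hab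
  rwa [Term.eval_prod] at h

lemma Subuniverse.neighbourhood (hR : Subuniverse (A.prod B) R) (hX : Subuniverse A X) :
    Subuniverse B (neighbourhood R X) := by
  intro s b hb
  choose a haX haR using hb
  exact ⟨A.op s a, hX s a haX, hR s (fun i => (a i, b i)) haR⟩

/-- Witnesses for the coordinates `i ≠ k` come from `X`; the one for `b k` exists only
because `R` projects onto `B`. -/
lemma AbsorbsWith.neighbourhood (hR : Subuniverse (A.prod B) R)
    (hRB : ∀ b, ∃ a, (a, b) ∈ R) {n : ℕ} {t : Term σ n} (hX : AbsorbsWith A X t) :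
    AbsorbsWith B (neighbourhood R X) t := by
  intro k b hb
  have hwit : ∀ i, ∃ a, (i ≠ k → a ∈ X) ∧ (a, b i) ∈ R := by
    intro i
    by_cases hik : i = k
    · obtain ⟨a, haR⟩ := hRB (b i)
      exact ⟨a, fun h => absurd hik h, haR⟩
    · obtain ⟨a, haX, haR⟩ := hb i hik
      exact ⟨a, fun _ => haX, haR⟩
  choose a haX haR using hwit
  exact ⟨t.eval A a, hX k a haX, hR.eval_mem_prod t haR⟩

end Neighbourhood

/-- Neighbourhoods preserve subuniverses and absorbing
subuniverses: if `R ≤ A × B` and `X ≤ A` then `X⁺ ≤ B`; moreover, if `R` is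
subdirect and `X` absorbs `A` with respect to `t`, then `X⁺` absorbs `B` with
respect to the same term `t`. -/
theorem neighbourhood_subuniverse {σ : Signature} (A B : UAlgebra σ)
    (R : Set (A.carrier × B.carrier)) (hR : Subuniverse (A.prod B) R)
    (X : Set A.carrier) :
    (Subuniverse A X → Subuniverse B {b | ∃ a ∈ X, (a, b) ∈ R}) ∧
    (Subdirect2 R → ∀ {n : ℕ} (t : Term σ n), AbsorbsWith A X t →
      AbsorbsWith B {b | ∃ a ∈ X, (a, b) ∈ R} t) :=
  ⟨hR.neighbourhood, fun hsub _ _ hX => hX.neighbourhood hR hsub.2⟩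
end

section
/- For every finite idempotent algebra A there exists a single term operation s of A such that for every subset B ⊆ A and every element b of the subalgebra generated by B, there exist elements a_0,...,a_{arity(s)-1} ∈ B with s(a_0,...,a_{arity(s)-1}) = b. -/
/-- The subuniverse of `A` generated by `B`. -/
def Generated {σ : Signature} (A : UAlgebra σ) (B : Set A.carrier) : Set A.carrier :=
  ⋂₀ {S | Subuniverse A S ∧ B ⊆ S}


/-!
If some basic operation is nullary, idempotency forces `A` to have at most one element.
Otherwise, for nonempty `B`, enumerating `B` by a tuple `e` of length `|A|` shows that every
element of the subalgebra generated by `B` is `t(e)` for a term `t` of arity `|A|`; only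
finitely many such terms are needed. In an idempotent algebra finitely many terms can be
merged into one: `t` and `u` are both minors of `(t ⋆ u)(x) = t(u(x₁₁, …), …, u(xₘ₁, …))`,
obtained by identifying variables along rows, resp. columns.
-/

variable {σ : Signature}

def Term.subst {p q : ℕ} : Term σ p → (Fin p → Term σ q) → Term σ q
  | .var i, g => g i
  | .app s ts, g => .app s fun j => (ts j).subst g

theorem Term.eval_subst (A : UAlgebra σ) {p q : ℕ} (t : Term σ p) (g : Fin p → Term σ q)
    (a : Fin q → A.carrier) :
    (t.subst g).eval A a = t.eval A fun i => (g i).eval A a := by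
  induction t with
  | var i => rfl
  | app s ts ih => exact congrArg (A.op s) (funext ih)

theorem Term.eval_const {A : UAlgebra σ} (hA : Idempotent A) {p : ℕ} (t : Term σ p)
    (x : A.carrier) : t.eval A (fun _ => x) = x := by
  induction t with
  | var i => rfl
  | app s ts ih =>
    change A.op s (fun j => (ts j).eval A fun _ => x) = x
    simp only [ih, hA s x]

def Term.star {p q : ℕ} (t : Term σ p) (u : Term σ q) : Term σ (p * q) :=
  t.subst fun i => u.subst fun j => .var (finProdFinEquiv (i, j))

theorem Term.eval_star (A : UAlgebra σ) {p q : ℕ} (t : Term σ p) (u : Term σ q)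
    (x : Fin (p * q) → A.carrier) :
    (t.star u).eval A x = t.eval A fun i => u.eval A fun j => x (finProdFinEquiv (i, j)) := by
  simp only [Term.star, Term.eval_subst]
  rfl

def Term.IsMinor (A : UAlgebra σ) {m n : ℕ} (t : Term σ m) (s : Term σ n) : Prop :=
  ∃ f : Fin n → Fin m, ∀ a : Fin m → A.carrier, s.eval A (a ∘ f) = t.eval A a

theorem Term.IsMinor.trans {A : UAlgebra σ} {k m n : ℕ} {t : Term σ m} {u : Term σ k}
    {s : Term σ n} (htu : t.IsMinor A u) (hus : u.IsMinor A s) : t.IsMinor A s := by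
  obtain ⟨f, hf⟩ := htu
  obtain ⟨g, hg⟩ := hus
  exact ⟨f ∘ g, fun a => (hg (a ∘ f)).trans (hf a)⟩

theorem Term.isMinor_star_left {A : UAlgebra σ} (hA : Idempotent A) {p q : ℕ}
    (t : Term σ p) (u : Term σ q) : t.IsMinor A (t.star u) := by
  refine ⟨fun k => (finProdFinEquiv.symm k).1, fun a => ?_⟩
  simp only [Term.eval_star, Function.comp_apply, Equiv.symm_apply_apply, u.eval_const hA]

theorem Term.isMinor_star_right {A : UAlgebra σ} (hA : Idempotent A) {p q : ℕ}
    (t : Term σ p) (u : Term σ q) : u.IsMinor A (t.star u) := by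
  refine ⟨fun k => (finProdFinEquiv.symm k).2, fun a => ?_⟩
  simp only [Term.eval_star, Function.comp_apply, Equiv.symm_apply_apply, t.eval_const hA]

theorem exists_isMinor_of_finite {A : UAlgebra σ} (hA : Idempotent A) {m : ℕ}
    {S : Set (Term σ m)} (hS : S.Finite) :
    ∃ (n : ℕ) (s : Term σ n), ∀ t ∈ S, t.IsMinor A s := by
  induction S, hS using Set.Finite.induction_on with
  | empty => exact ⟨1, .var 0, fun _ ht => ht.elim⟩
  | @insert t S _ _ ih =>
    obtain ⟨n, s, hs⟩ := ih
    refine ⟨_, t.star s, fun u hu => ?_⟩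
    rcases hu with rfl | hu
    · exact u.isMinor_star_left hA s
    · exact (hs u hu).trans (t.isMinor_star_right hA s)

theorem generated_subset {A : UAlgebra σ} {B S : Set A.carrier} (hS : Subuniverse A S)
    (hBS : B ⊆ S) : Generated A B ⊆ S :=
  Set.sInter_subset_of_mem ⟨hS, hBS⟩

theorem subuniverse_empty (A : UAlgebra σ) (hσ : ∀ c, σ.arity c ≠ 0) :
    Subuniverse A ∅ :=
  fun c _ ha => ha ⟨0, Nat.pos_of_ne_zero (hσ c)⟩

theorem generated_range_subset (A : UAlgebra σ) {k : ℕ} (e : Fin k → A.carrier) :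
    Generated A (Set.range e) ⊆ Set.range fun t : Term σ k => t.eval A e := by
  refine generated_subset (fun c a ha => ?_) ?_
  · choose ts hts using ha
    exact ⟨.app c ts, congrArg (A.op c) (funext hts)⟩
  · rintro _ ⟨i, rfl⟩
    exact ⟨.var i, rfl⟩

theorem exists_fin_card_range_eq {α : Type} [Fintype α] {B : Set α} (hB : B.Nonempty) :
    ∃ e : Fin (Fintype.card α) → α, Set.range e = B := by
  classical
  obtain ⟨b₀, hb₀⟩ := hB
  let enum := (Fintype.equivFin α).symm
  refine ⟨fun i => if enum i ∈ B then enum i else b₀, Set.Subset.antisymm ?_ fun x hx => ?_⟩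
  · rintro _ ⟨i, rfl⟩
    dsimp only
    split_ifs with h
    exacts [h, hb₀]
  · exact ⟨enum.symm x, by simp [hx]⟩

theorem exists_term_eval_eq_of_mem_generated {A : UAlgebra σ} [Fintype A.carrier]
    (hσ : ∀ c, σ.arity c ≠ 0) {B : Set A.carrier} {b : A.carrier} (hb : b ∈ Generated A B) :
    ∃ (t : Term σ (Fintype.card A.carrier)) (e : Fin (Fintype.card A.carrier) → A.carrier),
      (∀ i, e i ∈ B) ∧ t.eval A e = b := by
  have hB : B.Nonempty :=
    Set.nonempty_iff_ne_empty.2 fun h => generated_subset (subuniverse_empty A hσ) h.le hb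
  obtain ⟨e, rfl⟩ := exists_fin_card_range_eq hB
  obtain ⟨t, ht⟩ := generated_range_subset A e hb
  exact ⟨t, e, Set.mem_range_self, ht⟩

theorem subsingleton_of_arity_eq_zero {A : UAlgebra σ} (hA : Idempotent A) {c : σ.symbols}
    (hc : σ.arity c = 0) : Subsingleton A.carrier := by
  refine ⟨fun x y => (hA c x).symm.trans (Eq.trans ?_ (hA c y))⟩
  congr 1
  funext i
  exact (Fin.cast hc i).elim0

/-- For every finite idempotent algebra `A` there is a single term
`s` such that every element of the subalgebra generated by any subset `B ⊆ A` is
obtained by applying `s` to elements of `B`. -/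
theorem generating_term {σ : Signature} (A : UAlgebra σ) [Fintype A.carrier]
    (hA : Idempotent A) :
    ∃ (n : ℕ) (s : Term σ n), ∀ (B : Set A.carrier) (b : A.carrier),
      b ∈ Generated A B →
        ∃ a : Fin n → A.carrier, (∀ i, a i ∈ B) ∧ s.eval A a = b := by
  by_cases hconst : ∃ c, σ.arity c = 0
  · obtain ⟨c, hc⟩ := hconst
    have := subsingleton_of_arity_eq_zero hA hc
    exact ⟨0, .app c fun i => (Fin.cast hc i).elim0, fun _ _ _ =>
      ⟨Fin.elim0, fun i => i.elim0, Subsingleton.elim _ _⟩⟩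
  push Not at hconst
  choose T E hEB hTE using fun p : {p : Set A.carrier × A.carrier // p.2 ∈ Generated A p.1} =>
    exists_term_eval_eq_of_mem_generated hconst p.2
  obtain ⟨n, s, hs⟩ := exists_isMinor_of_finite hA (Set.finite_range T)
  refine ⟨n, s, fun B b hb => ?_⟩
  obtain ⟨f, hf⟩ := hs _ ⟨⟨(B, b), hb⟩, rfl⟩
  exact ⟨E _ ∘ f, fun i => hEB ⟨(B, b), hb⟩ (f i), (hf _).trans (hTE _)⟩
end
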